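/- Fix ζ > 0. For all sufficiently large n, the number of formulas C ∈ I*(ζ, n) in which some variable appears (as a positive or negative literal) in fewer than (1/10)·\binom{n−1}{2} clauses of C is less than 2^{0.8·\binom{n}{2}} · I(n−1). -/

import Mathlib

/-- A `k`-clause on `n` Boolean variables: a finite set of literals (variable, sign)
with `k` literals on `k` distinct variables. -/
def IsClause (n k : ℕ) (D : Finset (Fin n × Bool)) : Prop :=
  D.card = k ∧ (D.image Prod.fst).card = k

/-- An assignment `x` satisfies a clause (a conjunction of literals) if it makes
every literal true. -/
def SatClause {n : ℕ} (D : Finset (Fin n × Bool)) (x : Fin n → Bool) : Prop :=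
  ∀ p ∈ D, x p.1 = p.2

/-- A `k`-SAT formula on `n` variables: a nonempty finite set of `k`-clauses,
interpreted as the disjunction of its clauses. -/
def IsFormula (n k : ℕ) (C : Finset (Finset (Fin n × Bool))) : Prop :=
  C.Nonempty ∧ ∀ D ∈ C, IsClause n k D

/-- `F(C)`: the set of satisfying assignments of a formula `C`. -/
def SatSet {n : ℕ} (C : Finset (Finset (Fin n × Bool))) : Set (Fin n → Bool) :=
  {x | ∃ D ∈ C, SatClause D x}

/-- A formula is irredundant if every proper subformula has a strictly smaller
set of satisfying assignments. -/
def Irredundant {n : ℕ} (C : Finset (Finset (Fin n × Bool))) : Prop :=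
  ∀ C' ⊂ C, SatSet C' ⊂ SatSet C

/-- The `k`-SAT functions of `n` variables, identified with their sets of
satisfying assignments. -/
def SatFunctions (n k : ℕ) : Set (Set (Fin n → Bool)) :=
  {S | ∃ C, IsFormula n k C ∧ SatSet C = S}

/-- `G_k(n)`: the number of `k`-SAT functions of `n` variables. -/
noncomputable def numSatFunctions (k n : ℕ) : ℕ := Nat.card (SatFunctions n k)

/-- `I_k(n)`: the number of irredundant `k`-SAT formulas on `n` variables. -/
noncomputable def numIrredundant (k n : ℕ) : ℕ :=
  Nat.card {C : Finset (Finset (Fin n × Bool)) // IsFormula n k C ∧ Irredundant C}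

/-- `w` is a witness for the clause `D` in the formula `C`: it satisfies `D` but
no other clause of `C`. -/
def IsWitness {n : ℕ} (C : Finset (Finset (Fin n × Bool)))
    (D : Finset (Fin n × Bool)) (w : Fin n → Bool) : Prop :=
  SatClause D w ∧ ∀ D' ∈ C, D' ≠ D → ¬ SatClause D' w

/-- Every witness for every clause of `C` has fewer than `ζ n` coordinates
equal to `1`. -/
def SmallWitnesses {n : ℕ} (ζ : ℝ) (C : Finset (Finset (Fin n × Bool))) : Prop :=
  ∀ D ∈ C, ∀ w : Fin n → Bool, IsWitness C D w →
    (((Finset.univ : Finset (Fin n)).filter fun i => w i = true).card : ℝ) < ζ * n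

/-- The multiplicity of the literal `(v, b)` in `C`: the number of clauses of
`C` containing it. -/
def mult {n : ℕ} (C : Finset (Finset (Fin n × Bool))) (v : Fin n) (b : Bool) : ℕ :=
  (C.filter fun D => (v, b) ∈ D).card

/-- `C` is positive if `m(x) ≥ m(x̄)` for every variable `x`. -/
def PositiveFormula {n : ℕ} (C : Finset (Finset (Fin n × Bool))) : Prop :=
  ∀ v : Fin n, mult C v false ≤ mult C v true

/-- `I*(ζ, n)`: the set of irredundant positive 3-SAT formulas on `n` variables
all of whose witnesses have fewer than `ζ n` ones. -/
def Istar (ζ : ℝ) (n : ℕ) : Set (Finset (Finset (Fin n × Bool))) :=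
  {C | IsFormula n 3 C ∧ Irredundant C ∧ PositiveFormula C ∧ SmallWitnesses ζ C}

/-!
Let `x` be a variable lying in at most `t = ⌊binom(n-1,2)/10⌋` clauses of `C`. Then `C` is
determined by `x`, by the set `C_x` of its clauses through `x`, and by the formula on the other
`n - 1` variables formed by the remaining clauses; the latter is again irredundant (or empty),
because a witness of `C` restricts to a witness of it. The set `C_x` is one of at most
`∑_{s ≤ t} binom(M, s) ≤ (e M / t)^t` subsets of the `M ≤ 4 n^2` clauses through `x`, and
`e M / t ≈ 80 e < 2^8`. Hence the count is at most `n · 2^{8t} · (I(n-1) + 1) ≤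
2n · 2^{8t} · I(n-1)`, and `8t ≤ 0.8 binom(n-1,2) = 0.8 binom(n,2) - 0.8 (n-1)` leaves room
for the factor `2n`.
-/

open Finset

theorem irredundant_iff_forall_exists_isWitness {n : ℕ} {C : Finset (Finset (Fin n × Bool))} :
    Irredundant C ↔ ∀ D ∈ C, ∃ w, IsWitness C D w := by
  constructor
  · intro hC D hD
    obtain ⟨w, ⟨E, hE, hwE⟩, hw⟩ := Set.exists_of_ssubset (hC _ (erase_ssubset hD))
    have not_sat_other : ∀ E ∈ C, E ≠ D → ¬SatClause E w :=
      fun E hE hED hwE => hw ⟨E, mem_erase.2 ⟨hED, hE⟩, hwE⟩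
    obtain rfl : E = D := by_contra fun hED => not_sat_other E hE hED hwE
    exact ⟨w, hwE, not_sat_other⟩
  · intro hC C' hC'
    obtain ⟨D, hDC, hDC'⟩ := exists_of_ssubset hC'
    obtain ⟨w, hwD, hw⟩ := hC D hDC
    refine Set.ssubset_iff_subset_ne.2
      ⟨fun v ⟨E, hE, hvE⟩ => ⟨E, hC'.subset hE, hvE⟩, ?_⟩
    intro hSat
    obtain ⟨E, hE, hwE⟩ : w ∈ SatSet C' := by rw [hSat]; exact ⟨D, hDC, hwD⟩
    exact hw E (hC'.subset hE) (ne_of_mem_of_not_mem hE hDC') hwE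

theorem irredundant_singleton {n : ℕ} (D : Finset (Fin n × Bool)) (hD : ∃ w, SatClause D w) :
    Irredundant {D} := by
  refine irredundant_iff_forall_exists_isWitness.2 fun E hE => ?_
  obtain rfl := mem_singleton.1 hE
  obtain ⟨w, hw⟩ := hD
  exact ⟨w, hw, fun D' hD' hne => absurd (mem_singleton.1 hD') hne⟩

theorem Irredundant.subset {n : ℕ} {C C' : Finset (Finset (Fin n × Bool))} (hC : Irredundant C)
    (hC' : C' ⊆ C) : Irredundant C' := by
  refine irredundant_iff_forall_exists_isWitness.2 fun D hD => ?_
  obtain ⟨w, hwD, hw⟩ := irredundant_iff_forall_exists_isWitness.1 hC D (hC' hD)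
  exact ⟨w, hwD, fun E hE => hw E (hC' hE)⟩

section Comap

variable {m n : ℕ} (e : Fin m ↪ Fin n)

def litEmb : Fin m × Bool ↪ Fin n × Bool := e.prodMap (Function.Embedding.refl Bool)

noncomputable def comapClause (D : Finset (Fin n × Bool)) : Finset (Fin m × Bool) :=
  D.preimage (litEmb e) (litEmb e).injective.injOn

variable {e}

theorem map_comapClause {D : Finset (Fin n × Bool)} (hD : ∀ p ∈ D, p.1 ∈ Set.range e) :
    (comapClause e D).map (litEmb e) = D := by
  classical
  rw [comapClause, map_eq_image, image_preimage, filter_true_of_mem]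
  rintro ⟨i, b⟩ hp
  obtain ⟨j, rfl⟩ := hD _ hp
  exact ⟨(j, b), rfl⟩

theorem satClause_map_litEmb_iff (D : Finset (Fin m × Bool)) (w : Fin n → Bool) :
    SatClause (D.map (litEmb e)) w ↔ SatClause D (w ∘ e) := by
  simp only [SatClause, forall_mem_map]
  rfl

theorem satClause_comapClause_iff {D : Finset (Fin n × Bool)}
    (hD : ∀ p ∈ D, p.1 ∈ Set.range e) (w : Fin n → Bool) :
    SatClause (comapClause e D) (w ∘ e) ↔ SatClause D w := by
  conv_rhs => rw [← map_comapClause hD]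
  exact (satClause_map_litEmb_iff _ w).symm

theorem isClause_comapClause {k : ℕ} {D : Finset (Fin n × Bool)}
    (hD : ∀ p ∈ D, p.1 ∈ Set.range e) (hk : IsClause n k D) :
    IsClause m k (comapClause e D) := by
  classical
  have hvars : ((comapClause e D).image Prod.fst).map e = D.image Prod.fst := by
    conv_rhs => rw [← map_comapClause hD]
    simp [map_eq_image, image_image, litEmb, Function.comp_def]
  refine ⟨?_, ?_⟩
  · rw [← card_map (litEmb e), map_comapClause hD, hk.1]
  · rw [← card_map e, hvars, hk.2]

theorem IsWitness.comapClause {C : Finset (Finset (Fin n × Bool))}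
    (hC : ∀ D ∈ C, ∀ p ∈ D, p.1 ∈ Set.range e) {D : Finset (Fin n × Bool)} (hD : D ∈ C)
    {w : Fin n → Bool} (hw : IsWitness C D w) :
    IsWitness (C.image (comapClause e)) (comapClause e D) (w ∘ e) := by
  refine ⟨(satClause_comapClause_iff (hC D hD) w).2 hw.1, ?_⟩
  rintro _ hE' hne
  obtain ⟨E, hE, rfl⟩ := mem_image.1 hE'
  rw [satClause_comapClause_iff (hC E hE) w]
  exact hw.2 E hE fun h => hne (h ▸ rfl)

theorem Irredundant.image_comapClause {C : Finset (Finset (Fin n × Bool))} (hirr : Irredundant C)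
    (hC : ∀ D ∈ C, ∀ p ∈ D, p.1 ∈ Set.range e) :
    Irredundant (C.image (comapClause e)) := by
  refine irredundant_iff_forall_exists_isWitness.2 fun D' hD' => ?_
  obtain ⟨D, hD, rfl⟩ := mem_image.1 hD'
  obtain ⟨w, hw⟩ := irredundant_iff_forall_exists_isWitness.1 hirr D hD
  exact ⟨w ∘ e, hw.comapClause hC hD⟩

theorem image_map_image_comapClause {C : Finset (Finset (Fin n × Bool))}
    (hC : ∀ D ∈ C, ∀ p ∈ D, p.1 ∈ Set.range e) :
    (C.image (comapClause e)).image (·.map (litEmb e)) = C := by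
  classical
  rw [image_image]
  exact (image_congr fun D hD => map_comapClause (hC D hD)).trans image_id

end Comap

def clausesAt {n : ℕ} (C : Finset (Finset (Fin n × Bool))) (x : Fin n) :
    Finset (Finset (Fin n × Bool)) :=
  C.filter fun D => (x, true) ∈ D ∨ (x, false) ∈ D

section Split

variable {k m : ℕ} {C : Finset (Finset (Fin (m + 1) × Bool))} {x : Fin (m + 1)}

theorem mem_range_succAbove_of_mem_sdiff_clausesAt {D : Finset (Fin (m + 1) × Bool)}
    (hD : D ∈ C \ clausesAt C x) : ∀ p ∈ D, p.1 ∈ Set.range x.succAboveEmb := by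
  rintro ⟨i, b⟩ hp
  rw [Fin.coe_succAboveEmb, Fin.range_succAbove]
  rintro rfl
  obtain ⟨hDC, hDx⟩ := mem_sdiff.1 hD
  exact hDx (mem_filter.2 ⟨hDC, by cases b <;> simp [hp]⟩)

theorem clausesAt_union_image_map_comapClause :
    clausesAt C x ∪ ((C \ clausesAt C x).image (comapClause x.succAboveEmb)).image
      (·.map (litEmb x.succAboveEmb)) = C := by
  rw [image_map_image_comapClause fun _ => mem_range_succAbove_of_mem_sdiff_clausesAt]
  exact union_sdiff_of_subset (filter_subset _ C)

theorem image_comapClause_eq_empty_or (hC : IsFormula (m + 1) k C) (hirr : Irredundant C) :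
    (C \ clausesAt C x).image (comapClause x.succAboveEmb) = ∅ ∨
      (IsFormula m k ((C \ clausesAt C x).image (comapClause x.succAboveEmb)) ∧
        Irredundant ((C \ clausesAt C x).image (comapClause x.succAboveEmb))) := by
  rcases ((C \ clausesAt C x).image (comapClause x.succAboveEmb)).eq_empty_or_nonempty
    with h | h
  · exact .inl h
  refine .inr ⟨⟨h, ?_⟩, ?_⟩
  · intro D' hD'
    obtain ⟨D, hD, rfl⟩ := mem_image.1 hD'
    exact isClause_comapClause (mem_range_succAbove_of_mem_sdiff_clausesAt hD)
      (hC.2 D (mem_sdiff.1 hD).1)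
  · exact (hirr.subset sdiff_subset).image_comapClause
      fun _ => mem_range_succAbove_of_mem_sdiff_clausesAt

end Split

section Count

/-- Every `k`-clause mentioning `x` has the form `insert (x, b) L` with `#L = k - 1`. -/
def clausesThrough (n k : ℕ) (x : Fin n) : Finset (Finset (Fin n × Bool)) :=
  univ.biUnion fun b => (powersetCard (k - 1) univ).image (insert (x, b))

theorem card_clausesThrough_le (n k : ℕ) (x : Fin n) :
    #(clausesThrough n k x) ≤ 2 * (2 * n).choose (k - 1) := by
  calc #(clausesThrough n k x)
      ≤ ∑ b : Bool, #((powersetCard (k - 1) univ).image (insert (x, b))) := card_biUnion_le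
    _ ≤ ∑ _b : Bool, (2 * n).choose (k - 1) := by
      gcongr with b
      refine card_image_le.trans_eq ?_
      simp [mul_comm]
    _ = 2 * (2 * n).choose (k - 1) := by simp

theorem clausesAt_subset_clausesThrough {n k : ℕ} {C : Finset (Finset (Fin n × Bool))}
    (hC : IsFormula n k C) (x : Fin n) : clausesAt C x ⊆ clausesThrough n k x := by
  intro D hD
  obtain ⟨hDC, hx⟩ := mem_filter.1 hD
  obtain ⟨b, hb⟩ : ∃ b, (x, b) ∈ D := hx.elim (⟨true, ·⟩) (⟨false, ·⟩)
  refine mem_biUnion.2 ⟨b, mem_univ _, mem_image.2 ⟨D.erase (x, b), ?_, insert_erase hb⟩⟩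
  rw [mem_powersetCard_univ, card_erase_of_mem hb, (hC.2 D hDC).1]

theorem card_filter_powerset_card_le {α : Type*} [DecidableEq α] (T : Finset α) (t : ℕ) :
    #{S ∈ T.powerset | #S ≤ t} ≤ ∑ s ∈ range (t + 1), (#T).choose s := by
  calc #{S ∈ T.powerset | #S ≤ t}
      ≤ #((range (t + 1)).biUnion fun s => powersetCard s T) := by
        refine card_le_card fun S hS => ?_
        obtain ⟨hST, hSt⟩ := mem_filter.1 hS
        exact mem_biUnion.2 ⟨#S, mem_range.2 (Nat.lt_succ_of_le hSt),
          mem_powersetCard.2 ⟨mem_powerset.1 hST, rfl⟩⟩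
    _ ≤ ∑ s ∈ range (t + 1), #(powersetCard s T) := card_biUnion_le
    _ = ∑ s ∈ range (t + 1), (#T).choose s := by simp only [card_powersetCard]

variable {m : ℕ}

theorem card_sparse_at_le (k t : ℕ) (x : Fin (m + 1)) :
    Nat.card {C : Finset (Finset (Fin (m + 1) × Bool)) //
        IsFormula (m + 1) k C ∧ Irredundant C ∧ #(clausesAt C x) ≤ t} ≤
      (∑ s ∈ range (t + 1), (2 * (2 * (m + 1)).choose (k - 1)).choose s) *
        (numIrredundant k m + 1) := by
  classical
  set F := univ.filter fun C' : Finset (Finset (Fin m × Bool)) =>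
    IsFormula m k C' ∧ Irredundant C'
  have hF : #F = numIrredundant k m := by
    rw [numIrredundant, Nat.card_eq_fintype_card, Fintype.card_subtype]
  rw [Nat.card_eq_fintype_card, Fintype.card_subtype]
  calc #{C | IsFormula (m + 1) k C ∧ Irredundant C ∧ #(clausesAt C x) ≤ t}
      ≤ #({S ∈ (clausesThrough (m + 1) k x).powerset | #S ≤ t} ×ˢ insert ∅ F) := by
        refine card_le_card_of_injOn
          (fun C => (clausesAt C x, (C \ clausesAt C x).image (comapClause x.succAboveEmb)))
          (fun C hC => ?_) (fun C _ C' _ h => ?_)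
        · obtain ⟨hCf, hirr, ht⟩ := (mem_filter.1 hC).2
          refine mem_product.2 ⟨mem_filter.2 ⟨mem_powerset.2
            (clausesAt_subset_clausesThrough hCf x), ht⟩, ?_⟩
          rcases image_comapClause_eq_empty_or hCf hirr with h | h
          · exact h ▸ mem_insert_self _ _
          · exact mem_insert_of_mem (mem_filter.2 ⟨mem_univ _, h⟩)
        · obtain ⟨hat, hrest⟩ := Prod.ext_iff.1 h
          rw [← clausesAt_union_image_map_comapClause (C := C) (x := x),
            ← clausesAt_union_image_map_comapClause (C := C') (x := x)]
          simp only at hat hrest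
          rw [hrest, hat]
    _ ≤ (∑ s ∈ range (t + 1), (2 * (2 * (m + 1)).choose (k - 1)).choose s) *
          (numIrredundant k m + 1) := by
        rw [card_product, ← hF]
        gcongr
        · refine (card_filter_powerset_card_le _ t).trans (sum_le_sum fun s _ => ?_)
          exact Nat.choose_le_choose s (card_clausesThrough_le _ k x)
        · exact card_insert_le _ _

theorem card_exists_sparse_le (k t : ℕ) :
    Nat.card {C : Finset (Finset (Fin (m + 1) × Bool)) //
        IsFormula (m + 1) k C ∧ Irredundant C ∧ ∃ x, #(clausesAt C x) ≤ t} ≤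
      (m + 1) * ((∑ s ∈ range (t + 1), (2 * (2 * (m + 1)).choose (k - 1)).choose s) *
        (numIrredundant k m + 1)) := by
  classical
  have hsparse_at := fun x => card_sparse_at_le (m := m) k t x
  simp only [Nat.card_eq_fintype_card, Fintype.card_subtype] at hsparse_at ⊢
  calc #{C | IsFormula (m + 1) k C ∧ Irredundant C ∧ ∃ x, #(clausesAt C x) ≤ t}
      ≤ #(univ.biUnion fun x =>
          {C | IsFormula (m + 1) k C ∧ Irredundant C ∧ #(clausesAt C x) ≤ t}) := by
        refine card_le_card fun C hC => ?_
        obtain ⟨hCf, hirr, x, hx⟩ := (mem_filter.1 hC).2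
        exact mem_biUnion.2 ⟨x, mem_univ _, mem_filter.2 ⟨mem_univ _, hCf, hirr, hx⟩⟩
    _ ≤ _ := card_biUnion_le.trans ((sum_le_sum fun x _ => hsparse_at x).trans (by simp))

end Count

theorem sum_range_choose_le_exp_mul_div_pow {M t : ℕ} (ht : 0 < t) (htM : t ≤ M) :
    ∑ s ∈ range (t + 1), (M.choose s : ℝ) ≤ (Real.exp 1 * M / t) ^ t := by
  have ht' : (0 : ℝ) < t := by exact_mod_cast ht
  have hMt : (1 : ℝ) ≤ M / t := (one_le_div ht').2 (by exact_mod_cast htM)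
  calc ∑ s ∈ range (t + 1), (M.choose s : ℝ)
      ≤ ∑ s ∈ range (t + 1), (M / t : ℝ) ^ t * ((t : ℝ) ^ s / s.factorial) := by
        gcongr with s hs
        calc (M.choose s : ℝ) ≤ (M : ℝ) ^ s / s.factorial := Nat.choose_le_pow_div s M
          _ = (M / t : ℝ) ^ s * ((t : ℝ) ^ s / s.factorial) := by
            rw [← mul_div_assoc, ← mul_pow, div_mul_cancel₀ _ ht'.ne']
          _ ≤ (M / t : ℝ) ^ t * ((t : ℝ) ^ s / s.factorial) := by
            gcongr
            exact Nat.le_of_lt_succ (mem_range.1 hs)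
    _ ≤ (M / t : ℝ) ^ t * Real.exp t := by
        rw [← mul_sum]
        gcongr
        exact Real.sum_le_exp_of_nonneg ht'.le _
    _ = (Real.exp 1 * M / t) ^ t := by
        rw [← Real.exp_one_pow, mul_div_assoc, mul_pow, mul_comm]

theorem sum_range_choose_le_two_pow {m : ℕ} (hm : 100 ≤ m) :
    ∑ s ∈ range (m.choose 2 / 10 + 1), ((2 * (2 * (m + 1)).choose 2).choose s : ℝ) ≤
      2 ^ (8 * (m.choose 2 / 10)) := by
  set t := m.choose 2 / 10
  have hc : (m.choose 2 : ℝ) = m * (m - 1) / 2 := Nat.cast_choose_two ℝ m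
  have hM : ((2 * (2 * (m + 1)).choose 2 : ℕ) : ℝ) = (2 * m + 2) * (2 * m + 1) := by
    push_cast [Nat.cast_choose_two]
    ring
  have h10t : (m.choose 2 : ℝ) ≤ 10 * t + 9 := by
    exact_mod_cast (by omega : m.choose 2 ≤ 10 * t + 9)
  have hm' : (100 : ℝ) ≤ m := by exact_mod_cast hm
  have ht : 0 < t := by
    have : 10 ≤ m.choose 2 := (Nat.choose_le_choose 2 (by omega : 5 ≤ m)).trans' (by decide)
    omega
  have htM : t ≤ 2 * (2 * (m + 1)).choose 2 :=
    (Nat.div_le_self _ _).trans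
      ((Nat.choose_le_choose 2 (by omega : m ≤ 2 * (m + 1))).trans (by omega))
  have hratio : Real.exp 1 * (2 * (2 * (m + 1)).choose 2 : ℕ) / t ≤ 256 := by
    have he := Real.exp_one_lt_d9
    rw [div_le_iff₀ (by exact_mod_cast ht), hM]
    nlinarith
  calc _ ≤ (Real.exp 1 * (2 * (2 * (m + 1)).choose 2 : ℕ) / t) ^ t :=
        sum_range_choose_le_exp_mul_div_pow ht htM
    _ ≤ 256 ^ t := by gcongr
    _ = 2 ^ (8 * t) := by rw [pow_mul]; norm_num

theorem two_mul_succ_lt_two_pow_half {m : ℕ} (hm : 14 ≤ m) : 2 * (m + 1) < 2 ^ (m / 2) := by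
  have h := Nat.lt_two_pow_self (n := m / 2 - 3)
  have h8 : 2 ^ (m / 2) = 2 ^ (m / 2 - 3) * 8 := by
    rw [← Nat.sub_add_cancel (by omega : 3 ≤ m / 2), pow_add, Nat.add_sub_cancel]
    rfl
  omega

theorem two_mul_succ_mul_two_pow_lt {m t : ℕ} (hm : 14 ≤ m) (ht : 10 * t ≤ m.choose 2) :
    2 * (m + 1) * 2 ^ (8 * t) < (2 : ℝ) ^ ((0.8 : ℝ) * ((m + 1).choose 2 : ℝ)) := by
  have hc : (m.choose 2 : ℝ) = m * (m - 1) / 2 := Nat.cast_choose_two ℝ m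
  have hc' : ((m + 1).choose 2 : ℝ) = (m + 1) * m / 2 := by
    rw [Nat.cast_choose_two]; push_cast; ring
  have ht' : 10 * (t : ℝ) ≤ m.choose 2 := by exact_mod_cast ht
  have hhalf : ((m / 2 : ℕ) : ℝ) ≤ m / 2 := Nat.cast_div_le
  calc (2 * (m + 1) * 2 ^ (8 * t) : ℝ) < (2 ^ (m / 2 + 8 * t) : ℕ) := by
        rw [pow_add]
        exact_mod_cast Nat.mul_lt_mul_of_pos_right (two_mul_succ_lt_two_pow_half hm)
          (by positivity)
    _ = (2 : ℝ) ^ (((m / 2 + 8 * t : ℕ)) : ℝ) := by rw [Real.rpow_natCast]; push_cast; rfl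
    _ ≤ (2 : ℝ) ^ ((0.8 : ℝ) * ((m + 1).choose 2 : ℝ)) := by
        apply Real.rpow_le_rpow_of_exponent_le one_le_two
        push_cast
        nlinarith

theorem numIrredundant_pos {k m : ℕ} (hk : k ≤ m) : 0 < numIrredundant k m := by
  classical
  set D : Finset (Fin m × Bool) := univ.image fun i : Fin k => (Fin.castLE hk i, true)
  have hinj : Function.Injective fun i : Fin k => (Fin.castLE hk i, true) :=
    fun i j h => Fin.castLE_injective hk (Prod.ext_iff.1 h).1
  have hD : IsClause m k D := by
    refine ⟨by rw [card_image_of_injective _ hinj, card_univ, Fintype.card_fin], ?_⟩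
    rw [image_image]
    exact (card_image_of_injective _ (Fin.castLE_injective hk)).trans (by simp)
  have hsat : SatClause D fun _ => true := by
    intro p hp
    obtain ⟨i, -, rfl⟩ := mem_image.1 hp
    rfl
  have : Nonempty {C : Finset (Finset (Fin m × Bool)) // IsFormula m k C ∧ Irredundant C} :=
    ⟨⟨{D}, ⟨singleton_nonempty D, fun E hE => mem_singleton.1 hE ▸ hD⟩,
      irredundant_singleton D ⟨_, hsat⟩⟩⟩
  exact Nat.card_pos

theorem step0_low_degree_variable_general (ζ : ℝ) :
    ∃ N : ℕ, ∀ n : ℕ, N ≤ n →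
      (Nat.card {C : Finset (Finset (Fin n × Bool)) //
          C ∈ Istar ζ n ∧ ∃ x : Fin n,
            ((C.filter fun D => (x, true) ∈ D ∨ (x, false) ∈ D).card : ℝ)
              < (1 / 10) * ((n - 1).choose 2)} : ℝ)
        < 2 ^ ((0.8 : ℝ) * (n.choose 2 : ℝ)) * (numIrredundant 3 (n - 1) : ℝ) := by
  refine ⟨101, fun n hn => ?_⟩
  obtain ⟨m, rfl⟩ : ∃ m, n = m + 1 := ⟨n - 1, by omega⟩
  rw [Nat.add_sub_cancel]
  set t := m.choose 2 / 10
  have hsparse : Nat.card {C : Finset (Finset (Fin (m + 1) × Bool)) //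
      C ∈ Istar ζ (m + 1) ∧ ∃ x : Fin (m + 1),
        ((C.filter fun D => (x, true) ∈ D ∨ (x, false) ∈ D).card : ℝ) <
          1 / 10 * (m.choose 2)} ≤
      (m + 1) * ((∑ s ∈ range (t + 1), (2 * (2 * (m + 1)).choose (3 - 1)).choose s) *
        (numIrredundant 3 m + 1)) := by
    refine (Nat.card_mono (Set.toFinite _) ?_).trans (card_exists_sparse_le 3 t)
    rintro C ⟨⟨hCf, hirr, -⟩, x, hx⟩
    refine ⟨hCf, hirr, x, (Nat.le_div_iff_mul_le (by norm_num)).2 ?_⟩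
    change (#(clausesAt C x) : ℝ) < _ at hx
    exact_mod_cast (by linarith : (#(clausesAt C x) * 10 : ℝ) < m.choose 2).le
  have hI : (1 : ℝ) ≤ numIrredundant 3 m := by exact_mod_cast numIrredundant_pos (by omega)
  calc _ ≤ ((m + 1 : ℕ) : ℝ) * ((∑ s ∈ range (t + 1),
          ((2 * (2 * (m + 1)).choose 2).choose s : ℝ)) * (numIrredundant 3 m + 1)) := by
        exact_mod_cast hsparse
    _ ≤ ((m + 1 : ℕ) : ℝ) * (2 ^ (8 * t) * (2 * numIrredundant 3 m)) := by
        gcongr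
        · exact sum_range_choose_le_two_pow (by omega)
        · linarith
    _ = 2 * (m + 1) * 2 ^ (8 * t) * numIrredundant 3 m := by push_cast; ring
    _ < _ :=
      mul_lt_mul_of_pos_right (two_mul_succ_mul_two_pow_lt (by omega) (by omega)) (by linarith)

/-- For fixed `ζ > 0` and all sufficiently large `n`, the number of `C ∈ I*(ζ,n)`
in which some variable appears in fewer than `(1/10)·C(n-1,2)` clauses is less
than `2^{0.8·C(n,2)} · I(n-1)`. -/
theorem step0_low_degree_variable (ζ : ℝ) (hζ : 0 < ζ) :
    ∃ N : ℕ, ∀ n : ℕ, N ≤ n →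
      (Nat.card {C : Finset (Finset (Fin n × Bool)) //
          C ∈ Istar ζ n ∧ ∃ x : Fin n,
            ((C.filter fun D => (x, true) ∈ D ∨ (x, false) ∈ D).card : ℝ)
              < (1 / 10) * ((n - 1).choose 2)} : ℝ)
        < 2 ^ ((0.8 : ℝ) * (n.choose 2 : ℝ)) * (numIrredundant 3 (n - 1) : ℝ) :=
  step0_low_degree_variable_general ζ
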